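/- arXiv:math/0109008 — 3 statements merged into one kernel-verified Lean document; each statement's English description precedes it below -/
import Mathlib

section
/- Let T and F be nonnegative n×n matrices with ρ(T) < 1 and Q = F(I−T)^{-1}, R₀ = ρ(Q) > 0. Then ρ(T + F/R₀) = 1. -/
open Matrix Filter Topology

noncomputable def specRad {n : ℕ} (A : Matrix (Fin n) (Fin n) ℝ) : ℝ :=
  (spectralRadius ℂ (A.map Complex.ofReal)).toReal

def MatIrred {n : ℕ} (A : Matrix (Fin n) (Fin n) ℝ) : Prop :=
  ∀ i j, ∃ k : ℕ, 0 < k ∧ 0 < (A ^ k) i j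

def MatPrimitive {n : ℕ} (A : Matrix (Fin n) (Fin n) ℝ) : Prop :=
  ∃ k : ℕ, 0 < k ∧ ∀ i j, 0 < (A ^ k) i j

/-!
For a nonnegative matrix `A`, `ρ(A) < 1` holds iff `1 - A` has an entrywise nonnegative right
inverse: the Neumann series `∑ Aᵏ` is one, and conversely a nonnegative `N` with `(1 - A) N = 1`
bounds every partial sum of that series, which forces `Aᵏ → 0`.

With `U = (1 - T)⁻¹ ≥ 0`, the factorisation `1 - (T + B) = (1 - B U) (1 - T)` moves such inverses
back and forth, so `ρ(T + B) < 1 ↔ ρ(B U) < 1` for every `B ≥ 0`. For `B = F / R₀` we have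
`ρ(B U) = 1`, hence `ρ(T + B) ≥ 1`. Applied to `(T + B) / r` with `r > 1`, the same equivalence,
together with `(1 - T / r)⁻¹ ≤ U` entrywise and the monotonicity of `ρ` on nonnegative matrices,
gives `ρ(T + B) < r`.

The facts about `ρ` used here (scaling, monotonicity on nonnegative matrices, summability of `Aᵏ`
when `ρ(A) < 1`, and `ρ(A) ≤ ‖Aᵐ‖^(1/m)`) all follow from Gelfand's formula.
-/

attribute [local instance] Matrix.linftyOpNormedRing Matrix.linftyOpNormedAlgebra

section EntrywiseOrder

variable {l m o R : Type*} [Fintype m] [Semiring R] [PartialOrder R] [IsOrderedRing R]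

lemma Matrix.mul_apply_nonneg {A : Matrix l m R} {B : Matrix m o R} (hA : ∀ i j, 0 ≤ A i j)
    (hB : ∀ i j, 0 ≤ B i j) (i : l) (j : o) : 0 ≤ (A * B) i j :=
  Finset.sum_nonneg fun k _ => mul_nonneg (hA i k) (hB k j)

lemma Matrix.mul_apply_le_mul_apply {A A' : Matrix l m R} {B B' : Matrix m o R}
    (hA : ∀ i j, 0 ≤ A i j) (hB : ∀ i j, 0 ≤ B i j)
    (hAA' : ∀ i j, A i j ≤ A' i j) (hBB' : ∀ i j, B i j ≤ B' i j) (i : l) (j : o) :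
    (A * B) i j ≤ (A' * B') i j :=
  Finset.sum_le_sum fun k _ =>
    mul_le_mul (hAA' i k) (hBB' k j) (hB k j) ((hA i k).trans (hAA' i k))

lemma Matrix.pow_apply_le_pow_apply [DecidableEq m] {A B : Matrix m m R}
    (hA : ∀ i j, 0 ≤ A i j) (hAB : ∀ i j, A i j ≤ B i j) (k : ℕ) (i j : m) :
    (A ^ k) i j ≤ (B ^ k) i j := by
  induction k generalizing i j with
  | zero => rfl
  | succ k ih =>
    rw [pow_succ, pow_succ]
    exact mul_apply_le_mul_apply (pow_apply_nonneg hA k) hA ih hAB i j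

end EntrywiseOrder

section

variable {m : Type*} [Fintype m] [DecidableEq m]

lemma Matrix.linfty_opNorm_map_ofReal (A : Matrix m m ℝ) : ‖A.map Complex.ofReal‖ = ‖A‖ := by
  simp [linfty_opNorm_def]

lemma Matrix.linfty_opNorm_le_of_nonneg_of_le {A B : Matrix m m ℝ} (hA : ∀ i j, 0 ≤ A i j)
    (hAB : ∀ i j, A i j ≤ B i j) : ‖A‖ ≤ ‖B‖ := by
  rw [← coe_nnnorm, ← coe_nnnorm, NNReal.coe_le_coe, linfty_opNNNorm_def, linfty_opNNNorm_def]
  refine Finset.sup_mono_fun fun i _ => Finset.sum_le_sum fun j _ => ?_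
  rw [← NNReal.coe_le_coe, coe_nnnorm, coe_nnnorm, Real.norm_of_nonneg (hA i j),
    Real.norm_of_nonneg ((hA i j).trans (hAB i j))]
  exact hAB i j

theorem Matrix.tendsto_pow_of_one_sub_mul_eq_one {A N : Matrix m m ℝ}
    (hA : ∀ i j, 0 ≤ A i j) (hN : ∀ i j, 0 ≤ N i j) (hAN : (1 - A) * N = 1) :
    Tendsto (A ^ ·) atTop (𝓝 0) := by
  have partial_sum_le (K : ℕ) (i j : m) : ∑ k ∈ Finset.range K, (A ^ k) i j ≤ N i j := by
    have hK : ∑ k ∈ Finset.range K, A ^ k = N - A ^ K * N := by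
      rw [← mul_one (∑ k ∈ Finset.range K, A ^ k), ← hAN, ← mul_assoc, geom_sum_mul_neg,
        sub_mul, one_mul]
    rw [← Matrix.sum_apply, hK, Matrix.sub_apply, sub_le_self_iff]
    exact mul_apply_nonneg (pow_apply_nonneg hA K) hN i j
  refine tendsto_pi_nhds.2 fun i => tendsto_pi_nhds.2 fun j => ?_
  exact (summable_of_sum_range_le (fun k => pow_apply_nonneg hA k i j)
    (fun K => partial_sum_le K i j)).tendsto_atTop_zero

end

section SpectralRadius

variable {n : ℕ}

theorem tendsto_norm_pow_rpow_specRad (A : Matrix (Fin n) (Fin n) ℝ) :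
    Tendsto (fun k : ℕ => ‖A ^ k‖ ^ (1 / k : ℝ)) atTop (𝓝 (specRad A)) := by
  set Ac := A.map Complex.ofReal
  have hfin : spectralRadius ℂ Ac ≠ ⊤ :=
    ne_top_of_le_ne_top (by simp [ENNReal.mul_eq_top])
      (spectrum.spectralRadius_le_pow_nnnorm_pow_one_div ℂ Ac 0)
  refine ((ENNReal.tendsto_toReal hfin).comp
    (spectrum.pow_norm_pow_one_div_tendsto_nhds_spectralRadius Ac)).congr fun k => ?_
  have hpow : Ac ^ k = (A ^ k).map Complex.ofReal :=
    (map_pow Complex.ofRealHom.mapMatrix A k).symm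
  simp only [Function.comp_apply, hpow, linfty_opNorm_map_ofReal]
  exact ENNReal.toReal_ofReal (by positivity)

theorem specRad_smul (c : ℝ) (A : Matrix (Fin n) (Fin n) ℝ) :
    specRad (c • A) = |c| * specRad A := by
  refine tendsto_nhds_unique (tendsto_norm_pow_rpow_specRad (c • A))
    (((tendsto_norm_pow_rpow_specRad A).const_mul |c|).congr' ?_)
  filter_upwards [eventually_ne_atTop 0] with k hk
  rw [smul_pow, norm_smul, Real.norm_eq_abs, abs_pow,
    Real.mul_rpow (by positivity) (by positivity), one_div,
    Real.pow_rpow_inv_natCast (abs_nonneg c) hk]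

theorem specRad_mono {A B : Matrix (Fin n) (Fin n) ℝ} (hA : ∀ i j, 0 ≤ A i j)
    (hAB : ∀ i j, A i j ≤ B i j) : specRad A ≤ specRad B :=
  le_of_tendsto_of_tendsto' (tendsto_norm_pow_rpow_specRad A) (tendsto_norm_pow_rpow_specRad B)
    fun k => Real.rpow_le_rpow (norm_nonneg _)
      (linfty_opNorm_le_of_nonneg_of_le (pow_apply_nonneg hA k) (pow_apply_le_pow_apply hA hAB k))
      (by positivity)

theorem specRad_le_norm_pow_rpow (A : Matrix (Fin n) (Fin n) ℝ) {m : ℕ} (hm : m ≠ 0) :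
    specRad A ≤ ‖A ^ m‖ ^ (1 / m : ℝ) := by
  refine le_of_tendsto ((tendsto_norm_pow_rpow_specRad A).comp
    (tendsto_id.const_mul_atTop' (Nat.pos_of_ne_zero hm))) ?_
  filter_upwards [eventually_ne_atTop 0] with k hk
  calc ‖A ^ (m * k)‖ ^ (1 / (m * k : ℕ) : ℝ)
      ≤ (‖A ^ m‖ ^ k) ^ (1 / (m * k : ℕ) : ℝ) := by
        rw [pow_mul]
        exact Real.rpow_le_rpow (norm_nonneg _) (norm_pow_le' _ (Nat.pos_of_ne_zero hk))
          (by positivity)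
    _ = ‖A ^ m‖ ^ (1 / m : ℝ) := by
        rw [← Real.rpow_natCast_mul (norm_nonneg _)]
        congr 1
        push_cast
        field_simp

theorem summable_pow_of_specRad_lt_one {A : Matrix (Fin n) (Fin n) ℝ} (h : specRad A < 1) :
    Summable (A ^ ·) := by
  obtain ⟨θ, hρθ, hθ1⟩ := exists_between h
  have hθ0 : 0 ≤ θ := ENNReal.toReal_nonneg.trans hρθ.le
  refine Summable.of_norm_bounded_eventually_nat (summable_geometric_of_lt_one hθ0 hθ1) ?_
  filter_upwards [(tendsto_norm_pow_rpow_specRad A).eventually_lt_const hρθ,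
    eventually_ne_atTop 0] with k hk hk0
  rw [one_div, Real.rpow_inv_lt_iff_of_pos (norm_nonneg _) hθ0 (by positivity),
    Real.rpow_natCast] at hk
  exact hk.le

theorem specRad_lt_one_of_tendsto_pow {A : Matrix (Fin n) (Fin n) ℝ}
    (h : Tendsto (A ^ ·) atTop (𝓝 0)) : specRad A < 1 := by
  obtain ⟨m, hm1, hm0⟩ := ((tendsto_zero_iff_norm_tendsto_zero.1 h).eventually_lt_const
    one_pos |>.and (eventually_ne_atTop 0)).exists
  exact (specRad_le_norm_pow_rpow A hm0).trans_lt
    (Real.rpow_lt_one (norm_nonneg _) hm1 (by positivity))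

theorem specRad_lt_one_iff {A : Matrix (Fin n) (Fin n) ℝ} (hA : ∀ i j, 0 ≤ A i j) :
    specRad A < 1 ↔ ∃ N : Matrix (Fin n) (Fin n) ℝ, (∀ i j, 0 ≤ N i j) ∧ (1 - A) * N = 1 := by
  refine ⟨fun h => ?_, fun ⟨N, hN, hAN⟩ =>
    specRad_lt_one_of_tendsto_pow (tendsto_pow_of_one_sub_mul_eq_one hA hN hAN)⟩
  have hsum := summable_pow_of_specRad_lt_one h
  refine ⟨∑' k, A ^ k, fun i j => ?_, hsum.one_sub_mul_tsum_pow⟩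
  exact (Pi.hasSum.1 (Pi.hasSum.1 hsum.hasSum i) j).nonneg fun k => pow_apply_nonneg hA k i j

theorem inv_one_sub_apply_nonneg {A : Matrix (Fin n) (Fin n) ℝ} (hA : ∀ i j, 0 ≤ A i j)
    (h : specRad A < 1) (i j : Fin n) : 0 ≤ (1 - A)⁻¹ i j := by
  obtain ⟨N, hN, hAN⟩ := (specRad_lt_one_iff hA).1 h
  rw [inv_eq_right_inv hAN]
  exact hN i j

theorem inv_one_sub_apply_le_inv_one_sub_apply {A B : Matrix (Fin n) (Fin n) ℝ}
    (hA : ∀ i j, 0 ≤ A i j) (hAB : ∀ i j, A i j ≤ B i j) (hB : specRad B < 1) (i j : Fin n) :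
    (1 - A)⁻¹ i j ≤ (1 - B)⁻¹ i j := by
  obtain ⟨NA, hNA, hANA⟩ := (specRad_lt_one_iff hA).1 ((specRad_mono hA hAB).trans_lt hB)
  obtain ⟨NB, hNB, hBNB⟩ := (specRad_lt_one_iff fun i j => (hA i j).trans (hAB i j)).1 hB
  rw [inv_eq_right_inv hANA, inv_eq_right_inv hBNB, ← sub_nonneg, ← Matrix.sub_apply]
  have hdiff : NB - NA = NB * (B - A) * NA := by
    calc NB - NA = NB * ((1 - A) * NA) - NB * (1 - B) * NA := by
          rw [hANA, mul_eq_one_comm.1 hBNB, mul_one, one_mul]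
      _ = NB * (B - A) * NA := by noncomm_ring
  rw [hdiff]
  exact mul_apply_nonneg (mul_apply_nonneg hNB fun i j => sub_nonneg.2 (hAB i j)) hNA i j

theorem specRad_add_lt_one_iff {T B : Matrix (Fin n) (Fin n) ℝ} (hT : ∀ i j, 0 ≤ T i j)
    (hB : ∀ i j, 0 ≤ B i j) (hρT : specRad T < 1) :
    specRad (T + B) < 1 ↔ specRad (B * (1 - T)⁻¹) < 1 := by
  obtain ⟨U, hU, hTU⟩ := (specRad_lt_one_iff hT).1 hρT
  have hUT : U * (1 - T) = 1 := mul_eq_one_comm.1 hTU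
  rw [inv_eq_right_inv hTU, specRad_lt_one_iff (A := T + B) fun i j => add_nonneg (hT i j) (hB i j),
    specRad_lt_one_iff (mul_apply_nonneg hB hU)]
  constructor
  · rintro ⟨S, hS, hTBS⟩
    -- `(1 - B U)⁻¹ = (1 - T) S = 1 + B S`
    refine ⟨1 + B * S, fun i j =>
      add_nonneg (zero_le_one_elem i j) (mul_apply_nonneg hB hS i j), ?_⟩
    calc (1 - B * U) * (1 + B * S)
        = 1 + B * (U * ((1 - (T + B)) * S - 1) - (U * (1 - T) - 1) * S) := by noncomm_ring
      _ = 1 := by rw [hTBS, hUT]; simp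
  · rintro ⟨P, hP, hBUP⟩
    refine ⟨U * P, mul_apply_nonneg hU hP, ?_⟩
    calc (1 - (T + B)) * (U * P) = ((1 - T) * U - B * U) * P := by noncomm_ring
      _ = 1 := by rw [hTU, hBUP]

theorem specRad_add_le_one {T B : Matrix (Fin n) (Fin n) ℝ} (hT : ∀ i j, 0 ≤ T i j)
    (hB : ∀ i j, 0 ≤ B i j) (hρT : specRad T < 1) (h : specRad (B * (1 - T)⁻¹) ≤ 1) :
    specRad (T + B) ≤ 1 := by
  refine le_of_forall_gt fun r hr => ?_
  have hr0 : 0 < r := one_pos.trans hr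
  have hTr : ∀ i j, (r⁻¹ • T) i j ≤ T i j := fun i j =>
    mul_le_of_le_one_left (hT i j) (inv_le_one_of_one_le₀ hr.le)
  have hTr0 : ∀ i j, 0 ≤ (r⁻¹ • T) i j := fun i j => mul_nonneg (inv_nonneg.2 hr0.le) (hT i j)
  have hBr0 : ∀ i j, 0 ≤ (r⁻¹ • B) i j := fun i j => mul_nonneg (inv_nonneg.2 hr0.le) (hB i j)
  have hρTr : specRad (r⁻¹ • T) < 1 := (specRad_mono hTr0 hTr).trans_lt hρT
  have hUr0 := inv_one_sub_apply_nonneg hTr0 hρTr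
  suffices specRad (r⁻¹ • (T + B)) < 1 by
    rwa [specRad_smul, abs_of_pos (inv_pos.2 hr0), inv_mul_lt_iff₀ hr0, mul_one] at this
  rw [smul_add, specRad_add_lt_one_iff hTr0 hBr0 hρTr]
  calc specRad (r⁻¹ • B * (1 - r⁻¹ • T)⁻¹)
      ≤ specRad (r⁻¹ • B * (1 - T)⁻¹) :=
        specRad_mono (mul_apply_nonneg hBr0 hUr0) (mul_apply_le_mul_apply hBr0 hUr0
          (fun _ _ => le_rfl) (inv_one_sub_apply_le_inv_one_sub_apply hTr0 hTr hρT))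
    _ = r⁻¹ * specRad (B * (1 - T)⁻¹) := by
        rw [smul_mul_assoc, specRad_smul, abs_of_pos (inv_pos.2 hr0)]
    _ ≤ r⁻¹ := mul_le_of_le_one_right (inv_nonneg.2 hr0.le) h
    _ < 1 := inv_lt_one_of_one_lt₀ hr

end SpectralRadius

theorem scaled_specRad_one_general {n : ℕ} (T F : Matrix (Fin n) (Fin n) ℝ)
    (hT : ∀ i j, 0 ≤ T i j) (hF : ∀ i j, 0 ≤ F i j)
    (hρ : specRad T < 1)
    (R₀ : ℝ) (hR : R₀ = specRad (F * (1 - T)⁻¹)) (hRpos : 0 < R₀) :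
    specRad (T + R₀⁻¹ • F) = 1 := by
  have hB : ∀ i j, 0 ≤ (R₀⁻¹ • F) i j := fun i j => mul_nonneg (inv_nonneg.2 hRpos.le) (hF i j)
  have hBU : specRad (R₀⁻¹ • F * (1 - T)⁻¹) = 1 := by
    rw [smul_mul_assoc, specRad_smul, ← hR, abs_of_pos (inv_pos.2 hRpos),
      inv_mul_cancel₀ hRpos.ne']
  refine le_antisymm (specRad_add_le_one hT hB hρ hBU.le) (not_lt.1 fun h => ?_)
  exact ((specRad_add_lt_one_iff hT hB hρ).1 h).ne hBU
end

section
/- Let T and F be nonnegative n×n matrices with ρ(T) < 1 and ρ(F(I−T)^{-1}) > 0. Then the function a ↦ ρ(T + aF) is unbounded as a → ∞; in particular, for every M > 0 there exists a > 0 with ρ(T + aF) > M. -/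
/-!
Write `B = F (1 - T)⁻¹`. Since `ρ(T) < 1`, the Neumann series `∑ Tᵏ` converges to `(1 - T)⁻¹`,
which is therefore nonnegative, and so is `B`. A nonnegative matrix without closed walks is
nilpotent, so `ρ(B) > 0` yields a positive diagonal entry `c` of some `Bᵐ`, and then also of
`(F S)ᵐ` for a partial sum `S = ∑_{k<N} Tᵏ`. For `K = 1 + T + aF` the powers `Kᵏ` increase
entrywise with `k`, so `a F S ≤ N K^(N+1)` entrywise and
`aᵐ c ≤ Nᵐ (K^((N+1)m))ᵢᵢ ≤ Nᵐ ρ(K)^((N+1)m)`; the last step is Gelfand's formula, as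
`(Dᵢᵢ)ᵏ ≤ (Dᵏ)ᵢᵢ ≤ ‖Dᵏ‖` for nonnegative `D`. Finally `ρ(K) ≤ 1 + ρ(T + aF)`, so
`1 + ρ(T + aF)` grows at least like a positive multiple of `a ^ (1 / (N + 1))`.
-/

open Matrix Filter Topology

open scoped ENNReal NNReal

namespace spectrum

section NormedField

variable {𝕜 A : Type*} [NormedField 𝕜] [Ring A] [Algebra 𝕜 A]

theorem spectralRadius_one_add_le (a : A) :
    spectralRadius 𝕜 (1 + a) ≤ 1 + spectralRadius 𝕜 a := by
  refine iSup₂_le fun k hk => ?_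
  rw [← map_one (algebraMap 𝕜 A), ← singleton_add_eq] at hk
  obtain ⟨_, rfl, x, hx, rfl⟩ := hk
  calc (‖1 + x‖₊ : ℝ≥0∞) ≤ ‖(1 : 𝕜)‖₊ + ‖x‖₊ := mod_cast nnnorm_add_le 1 x
    _ ≤ 1 + spectralRadius 𝕜 a := by
      rw [nnnorm_one, ENNReal.coe_one]
      exact add_le_add_right (le_iSup₂ (α := ℝ≥0∞) x hx) 1

theorem spectralRadius_pow [IsAlgClosed 𝕜] (a : A) {n : ℕ} (hn : 0 < n) :
    spectralRadius 𝕜 (a ^ n) = spectralRadius 𝕜 a ^ n := by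
  refine le_antisymm ?_ (spectralRadius_pow_le a n hn.ne')
  refine iSup₂_le fun k hk => ?_
  rw [map_pow_of_pos a hn] at hk
  obtain ⟨x, hx, rfl⟩ := hk
  rw [nnnorm_pow, ENNReal.coe_pow]
  exact pow_le_pow_left' (le_iSup₂ (α := ℝ≥0∞) x hx) n

theorem _root_.IsNilpotent.spectralRadius_eq_zero {a : A} (ha : IsNilpotent a) :
    spectralRadius 𝕜 a = 0 := by
  cases subsingleton_or_nontrivial A
  · exact SpectralRadius.of_subsingleton a
  obtain ⟨n, hn⟩ := ha
  have hn0 : n ≠ 0 := by rintro rfl; exact one_ne_zero (pow_zero a ▸ hn)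
  have := spectralRadius_pow_le (𝕜 := 𝕜) a n hn0
  rw [hn, spectralRadius_zero, nonpos_iff_eq_zero] at this
  exact pow_eq_zero_iff hn0 |>.mp this

end NormedField

theorem spectralRadius_ne_top {𝕜 A : Type*} [NormedField 𝕜] [NormedRing A] [NormedAlgebra 𝕜 A]
    [CompleteSpace A] (a : A) : spectralRadius 𝕜 a ≠ ∞ :=
  ((spectralRadius_le_pow_nnnorm_pow_one_div 𝕜 a 0).trans_lt
    (ENNReal.mul_lt_top (by simp) (by simp))).ne

variable {A : Type*} [NormedRing A] [NormedAlgebra ℂ A] [CompleteSpace A]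

theorem le_spectralRadius_of_pow_le_nnnorm_pow {a : A} {c : ℝ≥0}
    (h : ∀ m, c ^ m ≤ ‖a ^ m‖₊) : (c : ℝ≥0∞) ≤ spectralRadius ℂ a := by
  refine ge_of_tendsto (pow_nnnorm_pow_one_div_tendsto_nhds_spectralRadius a) ?_
  filter_upwards [eventually_ne_atTop 0] with m hm
  calc (c : ℝ≥0∞) = ((c : ℝ≥0∞) ^ m) ^ (1 / m : ℝ) := by
        rw [one_div, ENNReal.pow_rpow_inv_natCast hm]
    _ ≤ (‖a ^ m‖₊ : ℝ≥0∞) ^ (1 / m : ℝ) := by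
        gcongr
        exact_mod_cast h m

theorem tendsto_pow_atTop_nhds_zero_of_spectralRadius_lt_one {a : A}
    (ha : spectralRadius ℂ a < 1) : Tendsto (a ^ ·) atTop (𝓝 0) := by
  obtain ⟨r, hρr, hr1⟩ := ENNReal.lt_iff_exists_nnreal_btwn.mp ha
  have hbound : ∀ᶠ m in atTop, ‖a ^ m‖₊ ≤ r ^ m := by
    filter_upwards [(pow_nnnorm_pow_one_div_tendsto_nhds_spectralRadius a).eventually_lt_const hρr,
      eventually_ne_atTop 0] with m hm hm0
    have := pow_le_pow_left' hm.le m
    rwa [one_div, ENNReal.rpow_inv_natCast_pow hm0, ← ENNReal.coe_pow, ENNReal.coe_le_coe] at this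
  refine tendsto_zero_iff_norm_tendsto_zero.mpr <|
    squeeze_zero' (.of_forall fun _ => norm_nonneg _) ?_
      (tendsto_pow_atTop_nhds_zero_of_lt_one r.coe_nonneg (mod_cast hr1))
  filter_upwards [hbound] with m hm
  exact_mod_cast hm

end spectrum

namespace Matrix

variable {ι R : Type*}

section OrderedSemiring

variable [Semiring R] [PartialOrder R] [IsOrderedRing R]

theorem one_apply_nonneg [DecidableEq ι] (i j : ι) : 0 ≤ (1 : Matrix ι ι R) i j := by
  by_cases h : i = j <;> simp [one_apply, h]

theorem mul_apply_nonneg_s7 [Fintype ι] {κ : Type*} {A : Matrix κ ι R} {B : Matrix ι κ R}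
    (hA : ∀ i j, 0 ≤ A i j) (hB : ∀ i j, 0 ≤ B i j) (i j : κ) : 0 ≤ (A * B) i j :=
  Finset.sum_nonneg fun l _ => mul_nonneg (hA i l) (hB l j)

theorem mul_apply_le_mul_apply_s7 [Fintype ι] {κ : Type*} {A B : Matrix κ ι R} {C D : Matrix ι κ R}
    (hA : ∀ i j, 0 ≤ A i j) (hC : ∀ i j, 0 ≤ C i j) (hAB : ∀ i j, A i j ≤ B i j)
    (hCD : ∀ i j, C i j ≤ D i j) (i j : κ) : (A * C) i j ≤ (B * D) i j :=
  Finset.sum_le_sum fun l _ => mul_le_mul (hAB i l) (hCD l j) (hC l j) ((hA i l).trans (hAB i l))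

variable [Fintype ι] [DecidableEq ι]

theorem pow_apply_le_pow_apply_s7 {A B : Matrix ι ι R} (hA : ∀ i j, 0 ≤ A i j)
    (hAB : ∀ i j, A i j ≤ B i j) (k : ℕ) (i j : ι) : (A ^ k) i j ≤ (B ^ k) i j := by
  induction k generalizing i j with
  | zero => rfl
  | succ k ih =>
    rw [pow_succ, pow_succ]
    exact mul_apply_le_mul_apply_s7 (pow_apply_nonneg hA k) hA ih hAB i j

theorem monotone_one_add_pow_apply {P : Matrix ι ι R} (hP : ∀ i j, 0 ≤ P i j) (i j : ι) :
    Monotone fun k : ℕ => ((1 + P) ^ k) i j := by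
  have h1P : ∀ i j, 0 ≤ (1 + P) i j := fun i j => add_nonneg (one_apply_nonneg i j) (hP i j)
  refine monotone_nat_of_le_succ fun k => ?_
  rw [pow_succ, mul_add, mul_one, add_apply]
  exact le_add_of_nonneg_right (mul_apply_nonneg_s7 (pow_apply_nonneg h1P k) hP i j)

theorem geom_sum_apply_nonneg {A : Matrix ι ι R} (hA : ∀ i j, 0 ≤ A i j) (N : ℕ) (i j : ι) :
    0 ≤ (∑ k ∈ Finset.range N, A ^ k) i j := by
  rw [Matrix.sum_apply]
  exact Finset.sum_nonneg fun k _ => pow_apply_nonneg hA k i j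

theorem pow_apply_self_le_apply_self_pow {A : Matrix ι ι R} (hA : ∀ i j, 0 ≤ A i j) (i : ι)
    (m : ℕ) : A i i ^ m ≤ (A ^ m) i i := by
  induction m with
  | zero => simp
  | succ m ih =>
    rw [pow_succ, pow_succ, mul_apply]
    calc A i i ^ m * A i i ≤ (A ^ m) i i * A i i := mul_le_mul_of_nonneg_right ih (hA i i)
      _ ≤ ∑ l, (A ^ m) i l * A l i :=
        Finset.single_le_sum (f := fun l => (A ^ m) i l * A l i)
          (fun l _ => mul_nonneg (pow_apply_nonneg hA m i l) (hA l i)) (Finset.mem_univ i)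

end OrderedSemiring

section StrictOrderedSemiring

variable [Semiring R] [LinearOrder R] [IsStrictOrderedRing R] [Fintype ι] [DecidableEq ι]
  {A : Matrix ι ι R}

theorem pow_add_apply_pos (hA : ∀ i j, 0 ≤ A i j) {k m : ℕ} {i l j : ι}
    (h₁ : 0 < (A ^ k) i l) (h₂ : 0 < (A ^ m) l j) : 0 < (A ^ (k + m)) i j := by
  rw [pow_add, mul_apply]
  exact Finset.sum_pos' (fun x _ => mul_nonneg (pow_apply_nonneg hA k i x)
    (pow_apply_nonneg hA m x j)) ⟨l, Finset.mem_univ l, mul_pos h₁ h₂⟩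

theorem exists_pow_apply_self_pos_of_not_isNilpotent (hA : ∀ i j, 0 ≤ A i j)
    (hnil : ¬ IsNilpotent A) : ∃ m, 0 < m ∧ ∃ i, 0 < (A ^ m) i i := by
  by_contra! hdiag
  refine hnil ⟨Fintype.card ι, ?_⟩
  -- Without closed walks, the set of vertices reachable from `j` shrinks strictly along each
  -- edge `l → j`, so no walk has length `card ι`.
  let reach : ι → Set ι := fun i => {j | ∃ m, 0 < m ∧ 0 < (A ^ m) i j}
  have not_mem_reach (i : ι) : i ∉ reach i := fun ⟨m, hm, hii⟩ => (hdiag m hm i).not_gt hii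
  have reach_ssubset {l j : ι} (hlj : 0 < A l j) : reach j ⊂ reach l := by
    refine Set.ssubset_iff_of_subset ?_ |>.mpr ⟨j, ⟨1, one_pos, by rwa [pow_one]⟩, not_mem_reach j⟩
    rintro x ⟨m, hm, hx⟩
    exact ⟨1 + m, by omega, pow_add_apply_pos hA (by rwa [pow_one]) hx⟩
  have ncard_reach_add_le (k : ℕ) (i j : ι) (hij : 0 < (A ^ k) i j) :
      (reach j).ncard + k ≤ (reach i).ncard := by
    induction k generalizing j with
    | zero =>
      obtain rfl : i = j := by by_contra h; simp [one_apply_ne h] at hij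
      rfl
    | succ k ih =>
      rw [pow_succ, mul_apply, Finset.sum_pos_iff_of_nonneg fun l _ =>
        mul_nonneg (pow_apply_nonneg hA k i l) (hA l j)] at hij
      obtain ⟨l, -, hl⟩ := hij
      have hil := pos_of_mul_pos_left hl (hA l j)
      have := Set.ncard_lt_ncard (reach_ssubset (pos_of_mul_pos_right hl hil.le))
      have := ih l hil
      omega
  have ncard_reach_lt (i : ι) : (reach i).ncard < Fintype.card ι := by
    rw [← Nat.card_eq_fintype_card, ← Set.ncard_univ]
    exact Set.ncard_lt_ncard (Set.ssubset_univ_iff.mpr fun h => not_mem_reach i (h ▸ trivial))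
  ext i j
  refine le_antisymm (not_lt.mp fun hij => ?_) (pow_apply_nonneg hA _ i j)
  have := ncard_reach_add_le _ i j hij
  have := ncard_reach_lt i
  omega

end StrictOrderedSemiring

section Field

variable {K : Type*} [Fintype ι] [DecidableEq ι] [Field K] [TopologicalSpace K]
  [IsTopologicalRing K] [T2Space K] {A : Matrix ι ι K}

theorem isUnit_det_one_sub_of_tendsto_pow (hA : Tendsto (A ^ ·) atTop (𝓝 0)) :
    IsUnit (1 - A).det := by
  refine isUnit_iff_ne_zero.mpr fun h0 => zero_ne_one (α := K) ?_
  have hlim : Tendsto (fun N => (1 - A ^ N).det) atTop (𝓝 (1 - 0 : Matrix ι ι K).det) :=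
    (continuous_id.matrix_det.tendsto _).comp (tendsto_const_nhds.sub hA)
  have hzero (N : ℕ) : (1 - A ^ N).det = 0 := by
    rw [← geom_sum_mul_neg, det_mul, h0, mul_zero]
  simp only [hzero, sub_zero, det_one] at hlim
  exact tendsto_nhds_unique tendsto_const_nhds hlim

theorem tendsto_geom_sum_nonsing_inv_one_sub (hA : Tendsto (A ^ ·) atTop (𝓝 0)) :
    Tendsto (fun N => ∑ k ∈ Finset.range N, A ^ k) atTop (𝓝 (1 - A)⁻¹) := by
  have hsum (N : ℕ) : ∑ k ∈ Finset.range N, A ^ k = (1 - A ^ N) * (1 - A)⁻¹ := by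
    rw [← geom_sum_mul_neg, mul_assoc, mul_nonsing_inv _ (isUnit_det_one_sub_of_tendsto_pow hA),
      mul_one]
  simpa [hsum] using ((tendsto_const_nhds (x := (1 : Matrix ι ι K))).sub hA).mul_const (1 - A)⁻¹

end Field

theorem smul_mul_geom_sum_apply_le [Fintype ι] [DecidableEq ι] {T F : Matrix ι ι ℝ}
    (hT : ∀ i j, 0 ≤ T i j) (hF : ∀ i j, 0 ≤ F i j) {a : ℝ} (ha : 0 ≤ a) (N : ℕ) (i j : ι) :
    (a • (F * ∑ k ∈ Finset.range N, T ^ k)) i j ≤ ((N : ℝ) • (1 + (T + a • F)) ^ (N + 1)) i j := by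
  set K := 1 + (T + a • F)
  have haF : ∀ i j, 0 ≤ (a • F) i j := fun i j => mul_nonneg ha (hF i j)
  have hP : ∀ i j, 0 ≤ (T + a • F) i j := fun i j => add_nonneg (hT i j) (haF i j)
  have hTK : ∀ i j, T i j ≤ K i j := fun i j => by
    simp only [K, Matrix.add_apply]
    linarith [one_apply_nonneg (R := ℝ) i j, haF i j]
  have haFK : ∀ i j, (a • F) i j ≤ K i j := fun i j => by
    simp only [K, Matrix.add_apply]
    linarith [one_apply_nonneg (R := ℝ) i j, hT i j]
  have hSK : ∀ i j, (∑ k ∈ Finset.range N, T ^ k) i j ≤ ((N : ℝ) • K ^ N) i j := fun i j => by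
    rw [Matrix.sum_apply, Matrix.smul_apply, smul_eq_mul]
    calc ∑ k ∈ Finset.range N, (T ^ k) i j ≤ ∑ _k ∈ Finset.range N, (K ^ N) i j :=
          Finset.sum_le_sum fun k hk => (pow_apply_le_pow_apply_s7 hT hTK k i j).trans
            (monotone_one_add_pow_apply hP i j (Finset.mem_range.mp hk).le)
      _ = N * (K ^ N) i j := by simp
  rw [← smul_mul, pow_succ', ← mul_smul_comm]
  exact mul_apply_le_mul_apply_s7 haF (geom_sum_apply_nonneg hT N) haFK hSK i j

end Matrix

section SpecRad

attribute [local instance] Matrix.linftyOpNormedRing Matrix.linftyOpNormedAlgebra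

variable {n : ℕ}

theorem abs_apply_le_norm_map_ofReal (A : Matrix (Fin n) (Fin n) ℝ) (i j : Fin n) :
    |A i j| ≤ ‖A.map Complex.ofReal‖ := by
  rw [linfty_opNorm_def]
  calc |A i j| = ‖(A.map Complex.ofReal) i j‖ := by simp
    _ ≤ ∑ l, ‖(A.map Complex.ofReal) i l‖ :=
      Finset.single_le_sum (f := fun l => ‖(A.map Complex.ofReal) i l‖)
        (fun _ _ => norm_nonneg _) (Finset.mem_univ j)
    _ = ((∑ l, ‖(A.map Complex.ofReal) i l‖₊ : ℝ≥0) : ℝ) := by push_cast; rfl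
    _ ≤ _ := NNReal.coe_le_coe.mpr <|
      Finset.le_sup (f := fun k => ∑ l, ‖(A.map Complex.ofReal) k l‖₊) (Finset.mem_univ i)

theorem map_ofReal_pow (A : Matrix (Fin n) (Fin n) ℝ) (k : ℕ) :
    (A ^ k).map Complex.ofReal = A.map Complex.ofReal ^ k :=
  Matrix.map_pow A Complex.ofRealHom k

theorem specRad_nonneg (A : Matrix (Fin n) (Fin n) ℝ) : 0 ≤ specRad A :=
  ENNReal.toReal_nonneg

theorem specRad_one_add_le (A : Matrix (Fin n) (Fin n) ℝ) :
    specRad (1 + A) ≤ 1 + specRad A := by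
  have hmap : (1 + A).map Complex.ofReal = 1 + A.map Complex.ofReal := by
    rw [Matrix.map_add, Matrix.map_one] <;> simp
  have hne := spectrum.spectralRadius_ne_top (𝕜 := ℂ) (A.map Complex.ofReal)
  rw [specRad, specRad, hmap, ← ENNReal.toReal_one, ← ENNReal.toReal_add ENNReal.one_ne_top hne]
  exact ENNReal.toReal_mono (ENNReal.add_ne_top.mpr ⟨ENNReal.one_ne_top, hne⟩)
    (spectrum.spectralRadius_one_add_le _)

theorem specRad_pow (A : Matrix (Fin n) (Fin n) ℝ) {q : ℕ} (hq : 0 < q) :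
    specRad (A ^ q) = specRad A ^ q := by
  rw [specRad, specRad, map_ofReal_pow, spectrum.spectralRadius_pow _ hq, ENNReal.toReal_pow]

theorem specRad_eq_zero_of_isNilpotent {A : Matrix (Fin n) (Fin n) ℝ} (hA : IsNilpotent A) :
    specRad A = 0 := by
  have : IsNilpotent (A.map Complex.ofReal) := hA.map (Complex.ofRealHom.mapMatrix (m := Fin n))
  rw [specRad, this.spectralRadius_eq_zero, ENNReal.toReal_zero]

theorem apply_self_le_specRad {A : Matrix (Fin n) (Fin n) ℝ} (hA : ∀ i j, 0 ≤ A i j)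
    (i : Fin n) : A i i ≤ specRad A := by
  lift A i i to ℝ≥0 using hA i i with c hc
  have hcρ : (c : ℝ≥0∞) ≤ spectralRadius ℂ (A.map Complex.ofReal) := by
    refine spectrum.le_spectralRadius_of_pow_le_nnnorm_pow fun m => ?_
    rw [← NNReal.coe_le_coe, NNReal.coe_pow, hc, coe_nnnorm, ← map_ofReal_pow]
    calc A i i ^ m ≤ (A ^ m) i i := pow_apply_self_le_apply_self_pow hA i m
      _ ≤ |(A ^ m) i i| := le_abs_self _
      _ ≤ _ := abs_apply_le_norm_map_ofReal _ i i
  simpa [specRad] using ENNReal.toReal_mono (spectrum.spectralRadius_ne_top _) hcρ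

theorem pow_apply_self_le_specRad_pow {A : Matrix (Fin n) (Fin n) ℝ} (hA : ∀ i j, 0 ≤ A i j)
    (i : Fin n) {q : ℕ} (hq : 0 < q) : (A ^ q) i i ≤ specRad A ^ q :=
  specRad_pow A hq ▸ apply_self_le_specRad (pow_apply_nonneg hA q) i

theorem tendsto_pow_apply_of_specRad_lt_one {A : Matrix (Fin n) (Fin n) ℝ} (hA : specRad A < 1)
    (i j : Fin n) : Tendsto (fun N => (A ^ N) i j) atTop (𝓝 0) := by
  have hρ : spectralRadius ℂ (A.map Complex.ofReal) < 1 :=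
    (ENNReal.toReal_lt_toReal (spectrum.spectralRadius_ne_top _) ENNReal.one_ne_top).mp
      (by rwa [ENNReal.toReal_one])
  refine squeeze_zero_norm (fun N => ?_) (tendsto_zero_iff_norm_tendsto_zero.mp
    (spectrum.tendsto_pow_atTop_nhds_zero_of_spectralRadius_lt_one hρ))
  rw [Real.norm_eq_abs, ← map_ofReal_pow]
  exact abs_apply_le_norm_map_ofReal _ i j

end SpecRad

theorem exists_pos_lt_of_pow_mul_le {f : ℝ → ℝ} (hf : ∀ a, 0 ≤ f a) {c C : ℝ} (hc : 0 < c)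
    (hC : 0 ≤ C) {m q : ℕ} (hm : m ≠ 0) (h : ∀ a, 0 ≤ a → a ^ m * c ≤ C * (1 + f a) ^ q)
    {M : ℝ} (hM : 0 ≤ M) : ∃ a, 0 < a ∧ M < f a := by
  set a := C * (M + 1) ^ q / c + 1
  have ha : 1 ≤ a := le_add_of_nonneg_left (by positivity)
  refine ⟨a, by positivity, ?_⟩
  have : C * (M + 1) ^ q < C * (1 + f a) ^ q := calc
    C * (M + 1) ^ q < a * c := by rw [add_mul, div_mul_cancel₀ _ hc.ne']; linarith
    _ ≤ a ^ m * c := by gcongr; exact le_self_pow₀ ha hm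
    _ ≤ C * (1 + f a) ^ q := h a (by positivity)
  have := lt_of_pow_lt_pow_left₀ q (add_nonneg zero_le_one (hf a)) (lt_of_mul_lt_mul_left this hC)
  linarith

theorem pow_mul_apply_le_one_add_specRad_pow {n : ℕ} {T F : Matrix (Fin n) (Fin n) ℝ}
    (hT : ∀ i j, 0 ≤ T i j) (hF : ∀ i j, 0 ≤ F i j) {a : ℝ} (ha : 0 ≤ a) (N : ℕ) {m : ℕ}
    (hm : 0 < m) (i : Fin n) :
    a ^ m * ((F * ∑ k ∈ Finset.range N, T ^ k) ^ m) i i ≤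
      (N : ℝ) ^ m * (1 + specRad (T + a • F)) ^ ((N + 1) * m) := by
  have hK : ∀ i j, 0 ≤ (1 + (T + a • F)) i j := fun i j =>
    add_nonneg (one_apply_nonneg i j) (add_nonneg (hT i j) (mul_nonneg ha (hF i j)))
  have hFS : ∀ i j, 0 ≤ (a • (F * ∑ k ∈ Finset.range N, T ^ k)) i j := fun i j =>
    mul_nonneg ha (mul_apply_nonneg_s7 hF (geom_sum_apply_nonneg hT N) i j)
  have h := pow_apply_le_pow_apply_s7 hFS (smul_mul_geom_sum_apply_le hT hF ha N) m i i
  rw [smul_pow, smul_pow, Matrix.smul_apply, Matrix.smul_apply, smul_eq_mul, smul_eq_mul,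
    ← pow_mul] at h
  calc a ^ m * ((F * ∑ k ∈ Finset.range N, T ^ k) ^ m) i i
      ≤ (N : ℝ) ^ m * ((1 + (T + a • F)) ^ ((N + 1) * m)) i i := h
    _ ≤ (N : ℝ) ^ m * specRad (1 + (T + a • F)) ^ ((N + 1) * m) := by
      gcongr
      exact pow_apply_self_le_specRad_pow hK i (by positivity)
    _ ≤ (N : ℝ) ^ m * (1 + specRad (T + a • F)) ^ ((N + 1) * m) := by
      gcongr
      exacts [specRad_nonneg _, specRad_one_add_le _]

theorem specRad_unbounded_of_R0_pos {n : ℕ} (T F : Matrix (Fin n) (Fin n) ℝ)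
    (hT : ∀ i j, 0 ≤ T i j) (hF : ∀ i j, 0 ≤ F i j)
    (hρ : specRad T < 1) (hR : 0 < specRad (F * (1 - T)⁻¹)) :
    ∀ M : ℝ, 0 < M → ∃ a : ℝ, 0 < a ∧ M < specRad (T + a • F) := by
  have hTpow : Tendsto (T ^ ·) atTop (𝓝 0) := tendsto_pi_nhds.mpr fun i =>
    tendsto_pi_nhds.mpr (tendsto_pow_apply_of_specRad_lt_one hρ i)
  have hS := tendsto_geom_sum_nonsing_inv_one_sub hTpow
  have hinv : ∀ i j, 0 ≤ (1 - T)⁻¹ i j := fun i j =>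
    ge_of_tendsto' (tendsto_pi_nhds.mp (tendsto_pi_nhds.mp hS i) j)
      fun N => geom_sum_apply_nonneg hT N i j
  obtain ⟨m, hm, i, hi⟩ := exists_pow_apply_self_pos_of_not_isNilpotent
    (mul_apply_nonneg_s7 hF hinv) fun h => hR.ne' (specRad_eq_zero_of_isNilpotent h)
  -- A truncation of the Neumann series of `(1 - T)⁻¹` keeps that diagonal entry positive.
  have hlim : Tendsto (fun N => ((F * ∑ k ∈ Finset.range N, T ^ k) ^ m) i i) atTop
      (𝓝 (((F * (1 - T)⁻¹) ^ m) i i)) :=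
    tendsto_pi_nhds.mp (tendsto_pi_nhds.mp ((tendsto_const_nhds.mul hS).pow m) i) i
  obtain ⟨N, hc⟩ := (hlim.eventually (eventually_gt_nhds hi)).exists
  exact fun M hM => exists_pos_lt_of_pow_mul_le (fun a => specRad_nonneg (T + a • F)) hc
    (by positivity) hm.ne' (fun a ha => pow_mul_apply_le_one_add_specRad_pow hT hF ha N hm i) hM.le
end

section
/- Let T and F be nonnegative n×n matrices with ρ(T) < 1, F ≠ 0, and T + F irreducible. Then Q = F(I−T)^{-1} has a zero row in exactly those positions where F has a zero row; consequently Q is irreducible if and only if every row of F contains a positive entry. -/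
open Matrix Filter Topology

/-!
Gelfand's formula turns `ρ(T) < 1` into `T ^ N → 0`, so `M = (1 - T)⁻¹` is the limit of the
partial sums of `∑ T ^ k`: it is entrywise nonnegative and satisfies `M = 1 + T * M`, whence
`1 ≤ M` and `T * M ≤ M` entrywise. The first gives `F ≤ F * M = Q`, so `Q` and `F` have the same
zero rows, and an irreducible matrix has no zero row. Conversely, a path from `w` to `j` in the
graph of `T + F` yields a positive entry of `M * Q ^ l` at `(w, j)`: a `T`-edge is absorbed by
`M` because `T * M ≤ M`, and an `F`-edge contributes one more factor `Q = F * M`. Prefixing an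
edge `i → w` of `F` gives `0 < (Q ^ (l + 1)) i j`.
-/

theorem pos_or_pos_of_add_pos {R : Type*} [AddZeroClass R] [PartialOrder R] {a b : R}
    (ha : 0 ≤ a) (h : 0 < a + b) : 0 < a ∨ 0 < b := by
  rcases ha.lt_or_eq with ha | rfl
  · exact .inl ha
  · exact .inr (by simpa using h)

namespace Matrix

variable {l m n R : Type*} [Fintype m] [Semiring R] [PartialOrder R]

section OrderedSemiring

variable [IsOrderedRing R] {A A' : Matrix l m R} {B B' : Matrix m n R}

theorem mul_apply_nonneg_s12 (hA : ∀ i k, 0 ≤ A i k) (hB : ∀ k j, 0 ≤ B k j) (i : l) (j : n) :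
    0 ≤ (A * B) i j :=
  Finset.sum_nonneg fun k _ => mul_nonneg (hA i k) (hB k j)

theorem apply_mul_apply_le_mul_apply (hA : ∀ i k, 0 ≤ A i k) (hB : ∀ k j, 0 ≤ B k j)
    (i : l) (k : m) (j : n) : A i k * B k j ≤ (A * B) i j :=
  Finset.single_le_sum (f := fun k => A i k * B k j)
    (fun k _ => mul_nonneg (hA i k) (hB k j)) (Finset.mem_univ k)

theorem mul_apply_le_mul_apply_left (hAA' : ∀ i k, A i k ≤ A' i k) (hB : ∀ k j, 0 ≤ B k j)
    (i : l) (j : n) : (A * B) i j ≤ (A' * B) i j :=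
  Finset.sum_le_sum fun k _ => mul_le_mul_of_nonneg_right (hAA' i k) (hB k j)

theorem mul_apply_le_mul_apply_right (hA : ∀ i k, 0 ≤ A i k) (hBB' : ∀ k j, B k j ≤ B' k j)
    (i : l) (j : n) : (A * B) i j ≤ (A * B') i j :=
  Finset.sum_le_sum fun k _ => mul_le_mul_of_nonneg_left (hBB' k j) (hA i k)

theorem exists_pos_of_mul_apply_pos (hA : ∀ i k, 0 ≤ A i k) (hB : ∀ k j, 0 ≤ B k j) {i : l}
    {j : n} (h : 0 < (A * B) i j) : ∃ k, 0 < A i k ∧ 0 < B k j := by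
  obtain ⟨k, -, hk⟩ := (Finset.sum_pos_iff_of_nonneg
    fun k _ => mul_nonneg (hA i k) (hB k j)).1 h
  refine ⟨k, (hA i k).lt_of_ne ?_, (hB k j).lt_of_ne ?_⟩ <;> rintro h0 <;> simp [← h0] at hk

section Square

variable [DecidableEq m] {T F M : Matrix m m R}

theorem one_apply_le_of_eq_one_add_mul (hT : ∀ i j, 0 ≤ T i j) (hM : ∀ i j, 0 ≤ M i j)
    (hTM : M = 1 + T * M) (i j : m) : (1 : Matrix m m R) i j ≤ M i j := by
  conv_rhs => rw [hTM]
  exact le_add_of_nonneg_right (mul_apply_nonneg_s12 hT hM i j)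

theorem mul_apply_le_of_eq_one_add_mul (hTM : M = 1 + T * M) (i j : m) :
    (T * M) i j ≤ M i j := by
  conv_rhs => rw [hTM]
  refine le_add_of_nonneg_left ?_
  rw [one_apply]
  split_ifs <;> simp

theorem mul_row_eq_zero_iff (hF : ∀ i j, 0 ≤ F i j) (hM : ∀ i j, (1 : Matrix m m R) i j ≤ M i j)
    (i : m) : (∀ j, (F * M) i j = 0) ↔ ∀ j, F i j = 0 := by
  refine ⟨fun h j => le_antisymm ?_ (hF i j), fun h j => ?_⟩
  · simpa [h j] using mul_apply_le_mul_apply_right hF hM i j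
  · simp [mul_apply, h]

end Square

end OrderedSemiring

section StrictOrderedSemiring

variable [IsStrictOrderedRing R]

theorem mul_apply_pos {A : Matrix l m R} {B : Matrix m n R} (hA : ∀ i k, 0 ≤ A i k)
    (hB : ∀ k j, 0 ≤ B k j) {i : l} {k : m} {j : n} (hAik : 0 < A i k) (hBkj : 0 < B k j) :
    0 < (A * B) i j :=
  (mul_pos hAik hBkj).trans_le (apply_mul_apply_le_mul_apply hA hB i k j)

theorem exists_pos_mul_pow_apply_of_add_pow_apply_pos [DecidableEq m] {T F M : Matrix m m R}
    (hT : ∀ i j, 0 ≤ T i j) (hF : ∀ i j, 0 ≤ F i j) (hM : ∀ i j, 0 ≤ M i j)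
    (hTM : M = 1 + T * M) (k : ℕ) (i j : m) (h : 0 < ((T + F) ^ k) i j) :
    ∃ l, 0 < (M * (F * M) ^ l) i j := by
  have hQ := pow_apply_nonneg (mul_apply_nonneg_s12 hF hM)
  have hMQ : ∀ l, ∀ i j, 0 ≤ (M * (F * M) ^ l) i j := fun l => mul_apply_nonneg_s12 hM (hQ l)
  have hOne := one_apply_le_of_eq_one_add_mul hT hM hTM
  have hTF : ∀ i j, 0 ≤ (T + F) i j := fun i j => add_nonneg (hT i j) (hF i j)
  induction k generalizing i with
  | zero =>
    exact ⟨0, by simpa using h.trans_le (hOne i j)⟩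
  | succ k ih =>
    rw [pow_succ'] at h
    obtain ⟨v, hiv, hvj⟩ := exists_pos_of_mul_apply_pos hTF (pow_apply_nonneg hTF k) h
    obtain ⟨l, hl⟩ := ih v hvj
    rcases pos_or_pos_of_add_pos (hT i v) hiv with hTiv | hFiv
    · refine ⟨l, (mul_apply_pos hT (hMQ l) hTiv hl).trans_le ?_⟩
      rw [← Matrix.mul_assoc]
      exact mul_apply_le_mul_apply_left (mul_apply_le_of_eq_one_add_mul hTM) (hQ l) i j
    · refine ⟨l + 1, (mul_apply_pos hF (hMQ l) hFiv hl).trans_le ?_⟩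
      rw [pow_succ', Matrix.mul_assoc F]
      simpa using mul_apply_le_mul_apply_left hOne (mul_apply_nonneg_s12 hF (hMQ l)) i j

end StrictOrderedSemiring

theorem nonsing_inv_one_sub_eq_one_add_mul {ι K : Type*} [Fintype ι] [DecidableEq ι] [CommRing K]
    {T : Matrix ι ι K} (h : IsUnit (1 - T).det) :
    (1 - T)⁻¹ = 1 + T * (1 - T)⁻¹ := by
  have := mul_nonsing_inv (1 - T) h
  rwa [Matrix.sub_mul, Matrix.one_mul, sub_eq_iff_eq_add] at this

section Neumann

variable {ι K : Type*} [Fintype ι] [DecidableEq ι] [Field K] [TopologicalSpace K]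
  [IsTopologicalRing K] {T : Matrix ι ι K}

theorem isUnit_det_one_sub_of_tendsto_pow_s12 [T1Space K] (hT : Tendsto (T ^ ·) atTop (𝓝 0)) :
    IsUnit (1 - T).det := by
  have hdet : Tendsto (fun N => (1 - T ^ N).det) atTop (𝓝 1) := by
    simpa [Function.comp_def] using
      (continuous_id.matrix_det.tendsto _).comp ((tendsto_const_nhds (x := 1)).sub hT)
  obtain ⟨N, hN⟩ := (hdet.eventually_ne one_ne_zero).exists
  rw [← geom_sum_mul_neg, det_mul] at hN
  exact (right_ne_zero_of_mul hN).isUnit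

theorem tendsto_sum_range_pow_nonsing_inv_one_sub [T1Space K]
    (hT : Tendsto (T ^ ·) atTop (𝓝 0)) :
    Tendsto (fun N => ∑ k ∈ Finset.range N, T ^ k) atTop (𝓝 (1 - T)⁻¹) := by
  have hinv := mul_nonsing_inv (1 - T) (isUnit_det_one_sub_of_tendsto_pow_s12 hT)
  have hsum : ∀ N, ∑ k ∈ Finset.range N, T ^ k = (1 - T ^ N) * (1 - T)⁻¹ := fun N => by
    rw [← geom_sum_mul_neg, Matrix.mul_assoc, hinv, Matrix.mul_one]
  simp_rw [hsum]
  simpa using ((tendsto_const_nhds (x := 1)).sub hT).mul_const (1 - T)⁻¹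

theorem nonsing_inv_one_sub_apply_nonneg [LinearOrder K] [IsStrictOrderedRing K]
    [OrderClosedTopology K] (hT0 : ∀ i j, 0 ≤ T i j) (hT : Tendsto (T ^ ·) atTop (𝓝 0))
    (i j : ι) : 0 ≤ (1 - T)⁻¹ i j :=
  ge_of_tendsto' (tendsto_pi_nhds.1 (tendsto_pi_nhds.1
    (tendsto_sum_range_pow_nonsing_inv_one_sub hT) i) j) fun N => by
    rw [sum_apply]
    exact Finset.sum_nonneg fun k _ => pow_apply_nonneg hT0 k i j

end Neumann

end Matrix

theorem tendsto_pow_atTop_nhds_zero_of_spectralRadius_lt_one {A : Type*} [NormedRing A]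
    [NormedAlgebra ℂ A] [CompleteSpace A] {a : A} (ha : spectralRadius ℂ a < 1) :
    Tendsto (a ^ ·) atTop (𝓝 0) := by
  obtain ⟨r, hρr, hr1⟩ := ENNReal.lt_iff_exists_nnreal_btwn.1 ha
  have hbound : ∀ᶠ N : ℕ in atTop, ‖a ^ N‖₊ ≤ r ^ N := by
    filter_upwards [(spectrum.pow_nnnorm_pow_one_div_tendsto_nhds_spectralRadius a).eventually
      (gt_mem_nhds hρr), eventually_gt_atTop 0] with N hN hN0
    have := (ENNReal.rpow_lt_rpow_iff (z := (N : ℝ)) (by positivity)).2 hN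
    rw [← ENNReal.rpow_mul, one_div_mul_cancel (by positivity), ENNReal.rpow_one,
      ENNReal.rpow_natCast] at this
    exact_mod_cast this.le
  rw [tendsto_zero_iff_norm_tendsto_zero]
  refine squeeze_zero' (Eventually.of_forall fun _ => norm_nonneg _) ?_
    (tendsto_pow_atTop_nhds_zero_of_lt_one r.2 (by exact_mod_cast hr1))
  filter_upwards [hbound] with N hN
  exact_mod_cast hN

theorem tendsto_pow_atTop_nhds_zero_of_specRad_lt_one {n : ℕ} {T : Matrix (Fin n) (Fin n) ℝ}
    (hT : specRad T < 1) : Tendsto (T ^ ·) atTop (𝓝 0) := by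
  -- a Banach algebra norm whose topology is the entrywise one, so the limit transfers back
  let := Matrix.linftyOpNormedRing (n := Fin n) (α := ℂ)
  let := Matrix.linftyOpNormedAlgebra (n := Fin n) (R := ℂ) (α := ℂ)
  set A := T.map Complex.ofReal
  have hA : spectralRadius ℂ A < 1 := by
    -- not `spectralRadius_le_nnnorm`: for `n = 0` the norm of `1` is `0`
    have hfin : spectralRadius ℂ A ≠ ⊤ :=
      ((spectrum.spectralRadius_le_pow_nnnorm_pow_one_div ℂ A 0).trans_lt
        (ENNReal.mul_lt_top (by simp) (by simp))).ne
    rwa [specRad, ← ENNReal.ofReal_lt_ofReal_iff_of_nonneg ENNReal.toReal_nonneg,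
      ENNReal.ofReal_toReal hfin, ENNReal.ofReal_one] at hT
  have h := ((continuous_id.matrix_map Complex.continuous_re).tendsto 0).comp
    (tendsto_pow_atTop_nhds_zero_of_spectralRadius_lt_one hA)
  convert h using 2 with N
  · have : A ^ N = (T ^ N).map Complex.ofReal := (Matrix.map_pow T Complex.ofRealHom N).symm
    simp [this, Matrix.map_map, Function.comp_def]
  · simp

theorem MatIrred.exists_apply_ne_zero {n : ℕ} {A : Matrix (Fin n) (Fin n) ℝ} (hA : MatIrred A)
    (i : Fin n) : ∃ j, A i j ≠ 0 := by
  obtain ⟨k, hk, hpos⟩ := hA i i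
  by_contra! h
  obtain ⟨k, rfl⟩ := Nat.exists_eq_add_of_lt hk
  rw [pow_succ', mul_apply] at hpos
  simp [h] at hpos

theorem matIrred_mul_of_eq_one_add_mul {n : ℕ} {T F M : Matrix (Fin n) (Fin n) ℝ}
    (hT : ∀ i j, 0 ≤ T i j) (hF : ∀ i j, 0 ≤ F i j) (hM : ∀ i j, 0 ≤ M i j)
    (hTM : M = 1 + T * M) (hirr : MatIrred (T + F)) (hrow : ∀ i, ∃ j, 0 < F i j) :
    MatIrred (F * M) := by
  intro i j
  obtain ⟨w, hw⟩ := hrow i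
  obtain ⟨k, -, hk⟩ := hirr w j
  obtain ⟨l, hl⟩ := exists_pos_mul_pow_apply_of_add_pow_apply_pos hT hF hM hTM k w j hk
  refine ⟨l + 1, l.succ_pos, ?_⟩
  rw [pow_succ', Matrix.mul_assoc]
  exact mul_apply_pos hF (mul_apply_nonneg_s12 hM (pow_apply_nonneg (mul_apply_nonneg_s12 hF hM) l)) hw hl

theorem nextgen_rows_and_irreducibility_general {n : ℕ} (T F : Matrix (Fin n) (Fin n) ℝ)
    (hT : ∀ i j, 0 ≤ T i j) (hF : ∀ i j, 0 ≤ F i j)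
    (hρ : specRad T < 1) (hirr : MatIrred (T + F)) :
    (∀ i, (∀ j, (F * (1 - T)⁻¹) i j = 0) ↔ (∀ j, F i j = 0)) ∧
    (MatIrred (F * (1 - T)⁻¹) ↔ ∀ i, ∃ j, 0 < F i j) := by
  have hpow := tendsto_pow_atTop_nhds_zero_of_specRad_lt_one hρ
  have hM := nonsing_inv_one_sub_apply_nonneg hT hpow
  have hTM := nonsing_inv_one_sub_eq_one_add_mul (isUnit_det_one_sub_of_tendsto_pow_s12 hpow)
  have hrows := mul_row_eq_zero_iff hF (one_apply_le_of_eq_one_add_mul hT hM hTM)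
  refine ⟨hrows, fun hQ i => ?_, matIrred_mul_of_eq_one_add_mul hT hF hM hTM hirr⟩
  obtain ⟨j, hj⟩ := hQ.exists_apply_ne_zero i
  by_contra! hFi
  exact hj ((hrows i).2 (fun j => le_antisymm (hFi j) (hF i j)) j)

theorem nextgen_rows_and_irreducibility {n : ℕ} (T F : Matrix (Fin n) (Fin n) ℝ)
    (hT : ∀ i j, 0 ≤ T i j) (hF : ∀ i j, 0 ≤ F i j)
    (hρ : specRad T < 1) (hF0 : F ≠ 0) (hirr : MatIrred (T + F)) :
    (∀ i, (∀ j, (F * (1 - T)⁻¹) i j = 0) ↔ (∀ j, F i j = 0)) ∧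
    (MatIrred (F * (1 - T)⁻¹) ↔ ∀ i, ∃ j, 0 < F i j) :=
  nextgen_rows_and_irreducibility_general T F hT hF hρ hirr
end
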